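/- Let ⟨σ_k : k ∈ ℕ⟩ be the standard length-lexicographic enumeration of 2^{<ω}, let π : ℕ → ℕ be a permutation, and let L ⊆ ℕ be such that for every σ ∈ 2^{<ω} the set [σ] ∩ {σ_k : k ∈ π[L]} is nonempty, where [σ] = {τ ∈ 2^{<ω} : σ ⊆ τ}. Define a_∅ = ∅ and, for each σ ∈ 2^{<ω}, a_{σ⌢0} = {k ∈ π[L] : σ⌢1 ⊆ σ_k} and a_{σ⌢1} = ℕ ∖ a_{σ⌢0}. Then ⟨a_σ : σ ∈ 2^{<ω}⟩ is a T-algebra on 2^{<ω}: for every x ∈ 2^{≤ω}, the sequence ⟨a_{x↾(n+1)} : n+1 ≤ dom(x)⟩ is a proper coherent sequence. -/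

import Mathlib

open Set

noncomputable section

/-- The least uncountable ordinal `ω₁`. -/
def omega1 : Ordinal := (Cardinal.aleph 1).ord

/-- `⋃_{γ ∈ F} a_γ` for a finite set `F` of indices. -/
def unionFin (a : Ordinal → Set ℕ) (F : Finset Ordinal) : Set ℕ :=
  ⋃ γ ∈ F, a γ

/-- A sequence of subsets of `ℕ`, with indices from a (downward closed) domain `D`
of ordinals, is coherent if for all `α ≤ β` in the domain there is a finite `F ⊆ α`
with `a α ∩ a β ⊆ ⋃_{γ∈F} a γ` or `a α ⊆ a β ∪ ⋃_{γ∈F} a γ`. -/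
def CoherentOn (D : Set Ordinal) (a : Ordinal → Set ℕ) : Prop :=
  ∀ α β : Ordinal, α ≤ β → β ∈ D →
    ∃ F : Finset Ordinal, (∀ γ ∈ F, γ < α) ∧
      (a α ∩ a β ⊆ unionFin a F ∨ a α ⊆ a β ∪ unionFin a F)

/-- Properness: no `a β` is contained in a finite union of earlier terms. -/
def ProperOn (D : Set Ordinal) (a : Ordinal → Set ℕ) : Prop :=
  ∀ β ∈ D, ∀ F : Finset Ordinal, (∀ γ ∈ F, γ < β) → ¬ a β ⊆ unionFin a F

/-- `â_β = { α ≤ β : a α ∖ a β ⊆ ⋃_{γ∈F} a γ for some finite F ⊆ α }`. -/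
def hatA (a : Ordinal → Set ℕ) (β : Ordinal) : Set Ordinal :=
  { α | α ≤ β ∧ ∃ F : Finset Ordinal, (∀ γ ∈ F, γ < α) ∧ a α \ a β ⊆ unionFin a F }

/-- The topology `τ(A)` on `λ + 1 = {α : α ≤ λ}` generated by the subbase
consisting of the sets `â_β` and their complements, `β < λ`. -/
def tau (lam : Ordinal) (a : Ordinal → Set ℕ) :
    TopologicalSpace {α : Ordinal // α ≤ lam} :=
  TopologicalSpace.generateFrom
    { s | ∃ β < lam, s = {x : {α : Ordinal // α ≤ lam} | x.1 ∈ hatA a β} ∨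
                     s = {x : {α : Ordinal // α ≤ lam} | x.1 ∈ hatA a β}ᶜ }

/-- The subspace `ω₁ = {α : α < ω₁}` of `(ω₁+1, τ(A))`. -/
def tauSub (a : Ordinal → Set ℕ) : TopologicalSpace {y : Ordinal // y < omega1} :=
  TopologicalSpace.induced
    (fun y : {y : Ordinal // y < omega1} => (⟨y.1, y.2.le⟩ : {α : Ordinal // α ≤ omega1}))
    (tau omega1 a)

/-- Closed unbounded subsets of `ω₁`. -/
def IsClubW1 (C : Set Ordinal) : Prop :=
  C ⊆ Iio omega1 ∧
  (∀ α < omega1, ∃ β ∈ C, α ≤ β) ∧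
  (∀ δ, δ < omega1 → δ ≠ 0 → (∀ α < δ, ∃ β ∈ C, α < β ∧ β < δ) → δ ∈ C)

/-- Stationary subsets of `ω₁`: sets meeting every club. -/
def IsStationaryW1 (S : Set Ordinal) : Prop :=
  ∀ C : Set Ordinal, IsClubW1 C → (S ∩ C).Nonempty

/-- The stationary covering property for a coherent sequence whose index domain is `D`:
if the sequence has length `ω₁` (i.e. `Iio ω₁ ⊆ D`), then every stationary `S ⊆ ω₁`
together with some finite `F` covers, i.e. `⋃_{γ ∈ S ∪ F} â_γ = ω₁`.  (Sequences of
length `< ω₁` have the ScP by convention.) -/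
def HasScP (D : Set Ordinal) (a : Ordinal → Set ℕ) : Prop :=
  Iio omega1 ⊆ D →
    ∀ S : Set Ordinal, S ⊆ Iio omega1 → IsStationaryW1 S →
      ∃ F : Finset Ordinal, (⋃ γ ∈ S ∪ (↑F : Set Ordinal), hatA a γ) = Iio omega1

/-- A node of the tree `2^{≤ω₁}`: a function `val` defined on the ordinals `< len`
(with the canonical value `false` beyond `len`). -/
structure Node where
  len : Ordinal
  val : Ordinal → Bool
  canon : ∀ α, len ≤ α → val α = false

open Classical in
/-- The restriction `x ↾ β`. -/
def Node.restrict (x : Node) (β : Ordinal) : Node where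
  len := β
  val := fun α => if α < β then x.val α else false
  canon := fun α h => if_neg (not_lt.2 h)

/-- `τ.Extends σ` means `σ ⊆ τ`, i.e. `τ` extends `σ`. -/
def Node.Extends (τ σ : Node) : Prop :=
  σ.len ≤ τ.len ∧ ∀ α < σ.len, τ.val α = σ.val α

/-- Successor ordinals. -/
def IsSucc (o : Ordinal) : Prop := ∃ β, o = β + 1

open Classical in
/-- `σ†`: if `σ` has successor length `β+1`, the node agreeing with `σ` except at `β`;
otherwise `σ` itself. -/
def Node.dagger (σ : Node) : Node :=
  if h : IsSucc σ.len then
    { len := σ.len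
      val := fun α => if α = Classical.choose h then !(σ.val α) else σ.val α
      canon := by
        intro α hα
        have hs := Classical.choose_spec h
        have hne : α ≠ Classical.choose h := by
          intro he
          rw [hs, he] at hα
          rw [Ordinal.add_one_eq_succ] at hα
          exact absurd hα (not_le.2 (Order.lt_succ (Classical.choose h)))
        show (if α = Classical.choose h then !(σ.val α) else σ.val α) = false
        rw [if_neg hne]
        exact σ.canon α hα }
  else σ

open Classical in
/-- `σ ⌢ b` : the node `σ` extended by one value `b`. -/
def Node.snoc (σ : Node) (b : Bool) : Node where
  len := σ.len + 1
  val := fun α => if α = σ.len then b else σ.val α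
  canon := by
    intro α hα
    have h1 : σ.len < α := by
      have h2 : σ.len < σ.len + 1 := by
        rw [Ordinal.add_one_eq_succ]; exact Order.lt_succ σ.len
      exact lt_of_lt_of_le h2 hα
    show (if α = σ.len then b else σ.val α) = false
    rw [if_neg h1.ne']
    exact σ.canon α h1.le

open Classical in
/-- `x ⌢ σ` : concatenation of nodes. -/
def Node.append (x σ : Node) : Node where
  len := x.len + σ.len
  val := fun α => if α < x.len then x.val α else σ.val (α - x.len)
  canon := by
    intro α hα
    have h1 : ¬ α < x.len := not_lt.2 (le_trans (le_self_add : x.len ≤ x.len + σ.len) hα)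
    show (if α < x.len then x.val α else σ.val (α - x.len)) = false
    rw [if_neg h1]
    apply σ.canon
    by_contra h2
    rw [not_le] at h2
    have h3 : α ≤ x.len + (α - x.len) := Ordinal.le_add_sub α x.len
    have h4 : x.len + (α - x.len) < x.len + σ.len := (add_lt_add_iff_left x.len).2 h2
    exact absurd hα (not_le.2 (lt_of_le_of_lt h3 h4))

/-- A subtree of `2^{<ω₁}` that is downward closed, twinned and has no maximal elements. -/
structure GoodTree (Γ : Set Node) : Prop where
  lt_omega1 : ∀ σ ∈ Γ, σ.len < omega1
  downward : ∀ σ ∈ Γ, ∀ β ≤ σ.len, σ.restrict β ∈ Γ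
  twinned : ∀ σ ∈ Γ, σ.dagger ∈ Γ
  noMax : ∀ σ ∈ Γ, ∃ τ ∈ Γ, σ.len < τ.len ∧ τ.Extends σ

/-- `X(Γ)`: the maximal branches of `Γ`, i.e. the minimal elements of `2^{≤ω₁} ∖ Γ`. -/
def XGamma (Γ : Set Node) : Set Node :=
  { x | x.len ≤ omega1 ∧ x ∉ Γ ∧ ∀ β < x.len, x.restrict β ∈ Γ }

/-- The index domain of the branch sequence `A_{Γ,x}`. -/
def branchDomain (Γ : Set Node) (x : Node) : Set Ordinal :=
  { α | α + 1 ≤ x.len ∧ x.restrict (α + 1) ∈ Γ }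

/-- The branch sequence `A_{Γ,x}`, `a^x_α = a_{x ↾ (α+1)}`. -/
def branchSeq (a : Node → Set ℕ) (x : Node) : Ordinal → Set ℕ :=
  fun α => a (x.restrict (α + 1))

/-- A `𝕋`-algebra on the tree `Γ`. -/
structure IsTAlgebra (Γ : Set Node) (a : Node → Set ℕ) : Prop where
  tree : GoodTree Γ
  empty_of_not_succ : ∀ σ ∈ Γ, ¬ IsSucc σ.len → a σ = ∅
  compl_dagger : ∀ σ ∈ Γ, IsSucc σ.len → a σ.dagger = (a σ)ᶜ
  branch_coherent : ∀ x : Node, x.len ≤ omega1 →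
    CoherentOn (branchDomain Γ x) (branchSeq a x)
  branch_proper : ∀ x : Node, x.len ≤ omega1 →
    ProperOn (branchDomain Γ x) (branchSeq a x)

/-- The Boolean subalgebra of `P(ℕ)` generated by a family `G`. -/
inductive GenBool (G : Set (Set ℕ)) : Set ℕ → Prop
  | basic (s : Set ℕ) : s ∈ G → GenBool G s
  | empty : GenBool G ∅
  | compl (s : Set ℕ) : GenBool G s → GenBool G sᶜ
  | inter (s t : Set ℕ) : GenBool G s → GenBool G t → GenBool G (s ∩ t)

/-- `B_Γ`: the Boolean subalgebra of `P(ℕ)` generated by `{a_σ : σ ∈ Γ}`. -/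
def BGamma (Γ : Set Node) (a : Node → Set ℕ) : Set (Set ℕ) :=
  { b | GenBool { s | ∃ σ ∈ Γ, s = a σ } b }

/-- A finite intersection from the family `{ℕ ∖ a_{x↾(α+1)} : α + 1 ≤ λ_x}`. -/
def finInterCompl (a : Node → Set ℕ) (x : Node) (F : Finset Ordinal) : Set ℕ :=
  ⋂ α ∈ F, (a (x.restrict (α + 1)))ᶜ

/-- The ultrafilter `U_x` on `B_Γ` generated by the finite intersections of
`{ℕ ∖ a_{x↾(α+1)} : α + 1 ≤ λ_x}`. -/
def Ux (Γ : Set Node) (a : Node → Set ℕ) (x : Node) : Set (Set ℕ) :=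
  { b | b ∈ BGamma Γ a ∧
    ∃ F : Finset Ordinal, (∀ α ∈ F, α + 1 ≤ x.len) ∧ finInterCompl a x F ⊆ b }

/-- The Stone topology on `X(Γ)`, with subbasic open sets `{z : b ∈ U_z}`, `b ∈ B_Γ`. -/
def stoneTop (Γ : Set Node) (a : Node → Set ℕ) :
    TopologicalSpace {z : Node // z ∈ XGamma Γ} :=
  TopologicalSpace.generateFrom
    { s | ∃ b ∈ BGamma Γ a, s = { z : {z : Node // z ∈ XGamma Γ} | b ∈ Ux Γ a z.1 } }

/-- An ultrafilter on a Boolean subalgebra `B` of `P(ℕ)`. -/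
def IsUltrafilterOn (B U : Set (Set ℕ)) : Prop :=
  U ⊆ B ∧
  (∀ s ∈ U, ∀ t ∈ U, s ∩ t ∈ U) ∧
  (∀ s ∈ U, ∀ t ∈ B, s ⊆ t → t ∈ U) ∧
  ∅ ∉ U ∧
  (∀ b ∈ B, Xor' (b ∈ U) (bᶜ ∈ U))

/-- The length-lexicographic (strict) order on finite binary strings. -/
def LenLexLT (σ τ : Node) : Prop :=
  σ.len < τ.len ∨ (σ.len = τ.len ∧ ∃ i < σ.len, σ.val i = false ∧ τ.val i = true ∧
    ∀ j < i, σ.val j = τ.val j)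

/-- `e` is the standard length-lexicographic enumeration of `2^{<ω}`. -/
def IsStdEnum (e : ℕ → Node) : Prop :=
  (∀ k, (e k).len < Ordinal.omega0) ∧
  (∀ σ : Node, σ.len < Ordinal.omega0 → ∃ k, e k = σ) ∧
  (∀ k l : ℕ, k < l → LenLexLT (e k) (e l))

/-- `⋃_{k<n} c^x_k` where `c^x_n = a^x_{e(n)} ∖ ⋃_{k<n} c^x_k` (recursively). -/
def cUnion (a : Node → Set ℕ) (x : Node) (eb : ℕ → Ordinal) : ℕ → Set ℕ
  | 0 => ∅
  | n + 1 => cUnion a x eb n ∪ (a (x.restrict (eb n + 1)) \ cUnion a x eb n)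

/-- `c^x_n = a^x_{e(n)} ∖ ⋃_{k<n} c^x_k`. -/
def cSeq (a : Node → Set ℕ) (x : Node) (eb : ℕ → Ordinal) (n : ℕ) : Set ℕ :=
  a (x.restrict (eb n + 1)) \ cUnion a x eb n

/-- `{x ⌢ σ : σ ∈ 2^{<ω}}`. -/
def appendSet (x : Node) : Set Node :=
  { τ | ∃ σ : Node, σ.len < Ordinal.omega0 ∧ τ = x.append σ }

/-- The defining equations of the extension `A_Γ[π,x]`:
`a_x = ∅`, `a_{x⌢(σ⌢0)} = ⋃{c^x_k : σ⌢1 ⊆ σ_{π(k)}}`, `a_{x⌢(σ⌢1)} = ℕ ∖ a_{x⌢(σ⌢0)}`. -/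
def ExtEquations (e : ℕ → Node) (π : ℕ → ℕ) (a : Node → Set ℕ) (x : Node)
    (eb : ℕ → Ordinal) (a' : Node → Set ℕ) : Prop :=
  a' x = ∅ ∧
  ∀ σ : Node, σ.len < Ordinal.omega0 →
    (a' (x.append (σ.snoc false)) =
      ⋃ k ∈ { k : ℕ | (e (π k)).Extends (σ.snoc true) }, cSeq a x eb k) ∧
    (a' (x.append (σ.snoc true)) = (a' (x.append (σ.snoc false)))ᶜ)

/-- The full tree `2^{<ω₁}`. -/
def GammaFull : Set Node := { σ | σ.len < omega1 }

theorem natLtOmega1 (n : ℕ) : (n : Ordinal) < omega1 := by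
  have h1 : (n : Ordinal) < Ordinal.omega0 := Ordinal.nat_lt_omega0 n
  have h2 : Ordinal.omega0 < omega1 := by
    rw [omega1, ← Cardinal.ord_aleph0]
    exact Cardinal.ord_lt_ord.2 (by rw [← Cardinal.aleph_zero]
                                    exact Cardinal.aleph_lt_aleph.2 zero_lt_one)
  exact h1.trans h2


/-! An index `k ∈ P` whose node `e k` extends `σ⌢b` lies in `a (σ⌢b')` exactly when `b' ≠ b`.
Along a branch `x` and for `m < n`, every `k` in the set coded by `x↾n ⌢ 1` has `e k` extending
`x↾(m+1)`, so that set is disjoint from `a (x↾(m+1))`; as `a (x↾(n+1))` is that set or its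
complement, coherence holds with `F = ∅`. An index of `P` whose node extends `x↾n ⌢ ¬x(n)`
(one exists by density) lies in `a (x↾(n+1))` but in no earlier term, which gives properness. -/

namespace Node

theorem ext_of_len_val {σ τ : Node} (hlen : σ.len = τ.len) (hval : σ.val = τ.val) : σ = τ := by
  cases σ; cases τ; simp_all

theorem Extends.trans {ρ σ τ : Node} (hρσ : ρ.Extends σ) (hστ : σ.Extends τ) : ρ.Extends τ :=
  ⟨hστ.1.trans hρσ.1, fun α hα => (hρσ.2 α (hα.trans_le hστ.1)).trans (hστ.2 α hα)⟩

theorem snoc_extends (σ : Node) (b : Bool) : (σ.snoc b).Extends σ :=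
  ⟨(lt_add_one σ.len).le, fun _ hα => if_neg hα.ne⟩

theorem restrict_extends_restrict (x : Node) {β γ : Ordinal} (h : β ≤ γ) :
    (x.restrict γ).Extends (x.restrict β) :=
  ⟨h, fun _ hα => (if_pos (hα.trans_le h)).trans (if_pos hα).symm⟩

theorem restrict_add_one (x : Node) (β : Ordinal) :
    x.restrict (β + 1) = (x.restrict β).snoc (x.val β) := by
  refine ext_of_len_val rfl (funext fun α => ?_)
  change (if α < β + 1 then x.val α else false)
    = if α = β then x.val β else if α < β then x.val α else false
  rcases lt_trichotomy α β with h | rfl | h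
  · simp [h, h.ne, h.trans (lt_add_one β)]
  · simp
  · simp [h.ne', h.not_gt, Order.lt_add_one_iff, h.not_ge]

theorem Extends.val_len_eq {τ σ : Node} {b : Bool} (h : τ.Extends (σ.snoc b)) :
    τ.val σ.len = b :=
  (h.2 σ.len (lt_add_one σ.len)).trans (if_pos rfl)

theorem snoc_restrict_extends_snoc_restrict (x : Node) {β γ : Ordinal} (h : β < γ)
    (b : Bool) : ((x.restrict γ).snoc b).Extends ((x.restrict β).snoc (x.val β)) :=
  x.restrict_add_one β ▸
    (snoc_extends _ b).trans (x.restrict_extends_restrict (Order.add_one_le_iff.mpr h))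

end Node

def coneIndices (e : ℕ → Node) (P : Set ℕ) (τ : Node) : Set ℕ :=
  { k | k ∈ P ∧ (e k).Extends τ }

def IsConeFamily (e : ℕ → Node) (P : Set ℕ) (a : Node → Set ℕ) : Prop :=
  ∀ σ : Node, σ.len < Ordinal.omega0 →
    a (σ.snoc false) = coneIndices e P (σ.snoc true) ∧
    a (σ.snoc true) = (coneIndices e P (σ.snoc true))ᶜ

section IsConeFamily

variable {e : ℕ → Node} {P : Set ℕ} {a : Node → Set ℕ}

theorem IsConeFamily.mem_snoc_iff (ha : IsConeFamily e P a) {σ : Node}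
    (hσ : σ.len < Ordinal.omega0) {k : ℕ} (hk : k ∈ P) {b : Bool}
    (hkb : (e k).Extends (σ.snoc b)) (b' : Bool) : k ∈ a (σ.snoc b') ↔ b' ≠ b := by
  have hcone : k ∈ coneIndices e P (σ.snoc true) ↔ b = true :=
    ⟨fun h => hkb.val_len_eq.symm.trans h.2.val_len_eq, by rintro rfl; exact ⟨hk, hkb⟩⟩
  cases b' <;> simp only [(ha σ hσ).1, (ha σ hσ).2, Set.mem_compl_iff, hcone] <;> cases b <;> simp

theorem branchSeq_eq_snoc (x : Node) (β : Ordinal) :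
    branchSeq a x β = a ((x.restrict β).snoc (x.val β)) :=
  congrArg a (x.restrict_add_one β)

variable {x : Node}

theorem IsConeFamily.disjoint_branchSeq_coneIndices (ha : IsConeFamily e P a) {β γ : Ordinal}
    (hβγ : β < γ) (hγ : γ < Ordinal.omega0) :
    Disjoint (branchSeq a x β) (coneIndices e P ((x.restrict γ).snoc true)) := by
  refine Set.disjoint_right.mpr fun k ⟨hkP, hk⟩ => ?_
  rw [branchSeq_eq_snoc, ha.mem_snoc_iff (hβγ.trans hγ) hkP
    (hk.trans (x.snoc_restrict_extends_snoc_restrict hβγ true))]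
  exact not_not.mpr rfl

theorem IsConeFamily.branchSeq_eq_or_eq_compl (ha : IsConeFamily e P a) {γ : Ordinal}
    (hγ : γ < Ordinal.omega0) :
    branchSeq a x γ = coneIndices e P ((x.restrict γ).snoc true) ∨
      branchSeq a x γ = (coneIndices e P ((x.restrict γ).snoc true))ᶜ := by
  rw [branchSeq_eq_snoc]
  cases x.val γ
  · exact .inl (ha _ hγ).1
  · exact .inr (ha _ hγ).2

theorem IsConeFamily.coherentOn_branchSeq (ha : IsConeFamily e P a)
    (hx : x.len ≤ Ordinal.omega0) :
    CoherentOn { α : Ordinal | α + 1 ≤ x.len } (branchSeq a x) := by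
  intro β γ hβγ hγ
  have hγω : γ < Ordinal.omega0 := (lt_add_one γ).trans_le (hγ.trans hx)
  refine ⟨∅, by simp, ?_⟩
  simp only [unionFin, Finset.notMem_empty, Set.iUnion_of_empty, Set.iUnion_empty,
    Set.subset_empty_iff, Set.union_empty, ← Set.disjoint_iff_inter_eq_empty]
  rcases hβγ.eq_or_lt with rfl | hlt
  · exact .inr subset_rfl
  have hdisj := ha.disjoint_branchSeq_coneIndices (x := x) hlt hγω
  rcases ha.branchSeq_eq_or_eq_compl hγω with h | h <;> rw [h]
  · exact .inl hdisj
  · exact .inr hdisj.subset_compl_right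

theorem IsConeFamily.exists_mem_branchSeq_notMem_of_lt (ha : IsConeFamily e P a)
    (hP : ∀ σ : Node, σ.len < Ordinal.omega0 → ∃ j ∈ P, (e j).Extends σ) {γ : Ordinal}
    (hγ : γ < Ordinal.omega0) :
    ∃ j ∈ branchSeq a x γ, ∀ β < γ, j ∉ branchSeq a x β := by
  obtain ⟨j, hjP, hj⟩ := hP ((x.restrict γ).snoc !x.val γ)
    (Ordinal.isSuccLimit_omega0.add_one_lt hγ)
  refine ⟨j, ?_, fun β hβ => ?_⟩
  · rw [branchSeq_eq_snoc, ha.mem_snoc_iff hγ hjP hj]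
    cases x.val γ <;> decide
  · rw [branchSeq_eq_snoc, ha.mem_snoc_iff (hβ.trans hγ) hjP
      (hj.trans (x.snoc_restrict_extends_snoc_restrict hβ _))]
    exact not_not.mpr rfl

theorem IsConeFamily.properOn_branchSeq (ha : IsConeFamily e P a)
    (hP : ∀ σ : Node, σ.len < Ordinal.omega0 → ∃ j ∈ P, (e j).Extends σ)
    (hx : x.len ≤ Ordinal.omega0) :
    ProperOn { α : Ordinal | α + 1 ≤ x.len } (branchSeq a x) := by
  intro γ hγ F hF hsub
  obtain ⟨j, hj, hj_notMem⟩ :=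
    ha.exists_mem_branchSeq_notMem_of_lt hP ((lt_add_one γ).trans_le (hγ.trans hx))
  obtain ⟨β, hβF, hjβ⟩ := Set.mem_iUnion₂.mp (hsub hj)
  exact hj_notMem β (hF β hβF) hjβ

end IsConeFamily

theorem stmt12_general (e : ℕ → Node)
    (π : ℕ → ℕ) (L : Set ℕ)
    (hL : ∀ σ : Node, σ.len < Ordinal.omega0 → ∃ j ∈ π '' L, (e j).Extends σ)
    (a : Node → Set ℕ)
    (ha1 : ∀ σ : Node, σ.len < Ordinal.omega0 →
      a (σ.snoc false) = { k : ℕ | k ∈ π '' L ∧ (e k).Extends (σ.snoc true) })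
    (ha2 : ∀ σ : Node, σ.len < Ordinal.omega0 →
      a (σ.snoc true) = { k : ℕ | k ∈ π '' L ∧ (e k).Extends (σ.snoc true) }ᶜ) :
    ∀ x : Node, x.len ≤ Ordinal.omega0 →
      CoherentOn { α : Ordinal | α + 1 ≤ x.len } (branchSeq a x) ∧
      ProperOn { α : Ordinal | α + 1 ≤ x.len } (branchSeq a x) := by
  have ha : IsConeFamily e (π '' L) a := fun σ hσ => ⟨ha1 σ hσ, ha2 σ hσ⟩
  exact fun x hx => ⟨ha.coherentOn_branchSeq hx, ha.properOn_branchSeq hL hx⟩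

/-- Proposition: from the standard length-lexicographic enumeration `⟨σ_k⟩` of
`2^{<ω}`, a permutation `π` of `ℕ` and `L ⊆ ℕ` such that `[σ] ∩ {σ_k : k ∈ π[L]} ≠ ∅`
for all `σ`, the family with `a_∅ = ∅`, `a_{σ⌢0} = {k ∈ π[L] : σ⌢1 ⊆ σ_k}` and
`a_{σ⌢1} = ℕ ∖ a_{σ⌢0}` is a `𝕋`-algebra on `2^{<ω}`: every branch sequence is a
proper coherent sequence. -/
theorem stmt12 (e : ℕ → Node) (he : IsStdEnum e)
    (π : ℕ → ℕ) (hπ : Function.Bijective π) (L : Set ℕ)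
    (hL : ∀ σ : Node, σ.len < Ordinal.omega0 → ∃ j ∈ π '' L, (e j).Extends σ)
    (a : Node → Set ℕ)
    (ha0 : ∀ σ : Node, ¬ IsSucc σ.len → a σ = ∅)
    (ha1 : ∀ σ : Node, σ.len < Ordinal.omega0 →
      a (σ.snoc false) = { k : ℕ | k ∈ π '' L ∧ (e k).Extends (σ.snoc true) })
    (ha2 : ∀ σ : Node, σ.len < Ordinal.omega0 →
      a (σ.snoc true) = { k : ℕ | k ∈ π '' L ∧ (e k).Extends (σ.snoc true) }ᶜ) :
    ∀ x : Node, x.len ≤ Ordinal.omega0 →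
      CoherentOn { α : Ordinal | α + 1 ≤ x.len } (branchSeq a x) ∧
      ProperOn { α : Ordinal | α + 1 ≤ x.len } (branchSeq a x) :=
  stmt12_general e π L hL a ha1 ha2

end
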